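/- Let d be a metrically proper compatible left-invariant metric on a metrisable topological group G. The following are equivalent: (1) d is maximal; (2) (G,d) is large scale geodesic; (3) there is ε > 0 so that the ball B_ε = {g ∈ G : d(g,1) ≤ ε} generates G and d is quasi-isometric to the word metric ρ_{B_ε}. -/

import Mathlib

open Filter Topology
open scoped Pointwise

/-- A (plain) metric given as a distance function. -/
def IsMetric {G : Type*} (d : G → G → ℝ) : Prop :=
  (∀ x y, d x y = 0 ↔ x = y) ∧ (∀ x y, d x y = d y x) ∧ ∀ x y z, d x z ≤ d x y + d y z

/-- The metric `d` induces the topology of `G`. -/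
def IsCompatible (G : Type*) [TopologicalSpace G] (d : G → G → ℝ) : Prop :=
  ∀ (x : G) (s : Set G), s ∈ nhds x ↔ ∃ ε > (0 : ℝ), {y : G | d x y < ε} ⊆ s

/-- A compatible left-invariant metric on a topological group. -/
def IsCompatibleLeftInvariantMetric (G : Type*) [Group G] [TopologicalSpace G]
    (d : G → G → ℝ) : Prop :=
  IsMetric d ∧ IsCompatible G d ∧ ∀ h g f : G, d (h * g) (h * f) = d g f

/-- A set has finite diameter with respect to `d`. -/
def FiniteDiam {G : Type*} (d : G → G → ℝ) (A : Set G) : Prop :=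
  ∃ C : ℝ, ∀ x ∈ A, ∀ y ∈ A, d x y ≤ C

/-- `A` has property (OB) relative to `G`: finite diameter for every compatible
left-invariant metric. -/
def HasRelPropOB (G : Type*) [Group G] [TopologicalSpace G] (A : Set G) : Prop :=
  ∀ d : G → G → ℝ, IsCompatibleLeftInvariantMetric G d → FiniteDiam d A

/-- A sequence tends to infinity in `G` if some compatible left-invariant metric
witnesses `d (g n) 1 → ∞`. -/
def TendsToInfinity (G : Type*) [Group G] [TopologicalSpace G] (g : ℕ → G) : Prop :=
  ∃ d : G → G → ℝ, IsCompatibleLeftInvariantMetric G d ∧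
    Filter.Tendsto (fun n => d (g n) 1) Filter.atTop Filter.atTop

/-- A compatible left-invariant metric is metrically proper if `d (g n) 1 → ∞`
whenever `g n → ∞`. -/
def MetricallyProperMetric (G : Type*) [Group G] [TopologicalSpace G]
    (d : G → G → ℝ) : Prop :=
  ∀ g : ℕ → G, TendsToInfinity G g →
    Filter.Tendsto (fun n => d (g n) 1) Filter.atTop Filter.atTop

/-- The word metric (with values in `ℝ`) associated to a symmetric generating set `S`. -/
noncomputable def wordMetric {G : Type*} [Group G] (S : Set G) (f h : G) : ℝ :=
  sInf {r : ℝ | ∃ l : List G, (∀ x ∈ l, x ∈ S) ∧ f = h * l.prod ∧ r = l.length}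


/-!
Metric properness makes every `d`-ball bounded for any other compatible left-invariant metric
`e` (otherwise `d + e` would send a `d`-bounded sequence to infinity). So if a ball `B_ε`
generates `G` and `ρ_{B_ε} ≤ K d + K`, then `e ≤ C ρ_{B_ε} ≤ C (K d + K)`: `d` is maximal.

A maximal `d` has a generating ball: otherwise the subgroups `⟨B_{n+1}⟩` exhaust `G` without
stabilising, and adding to `d` a fast-growing function of the level `n` of `f⁻¹ g` gives a
compatible metric not dominated by `d`. Maximality then bounds the path metric of `d` along
`N`-chains by `K d + K`, which is large-scale geodesicity.

Finally, along a `K`-chain of total length `L` one only needs a new ball of radius `2K` each time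
the chain has moved a distance `K` from the previous anchor point, so `ρ_{B_{2K}} ≤ L / K + 1`.
-/

def IsMaximalMetric (G : Type*) [Group G] [TopologicalSpace G] (d : G → G → ℝ) : Prop :=
  ∀ e : G → G → ℝ, IsCompatibleLeftInvariantMetric G e →
    ∃ K : ℝ, 1 ≤ K ∧ ∀ g f : G, e g f ≤ K * d g f + K

def IsLargeScaleGeodesic {G : Type*} (d : G → G → ℝ) : Prop :=
  ∃ K : ℝ, 1 ≤ K ∧ ∀ x y : G, ∃ (n : ℕ) (z : ℕ → G), z 0 = x ∧ z n = y ∧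
    (∀ i < n, d (z i) (z (i + 1)) ≤ K) ∧
    (∑ i ∈ Finset.range n, d (z i) (z (i + 1))) ≤ K * d x y

namespace IsCompatibleLeftInvariantMetric

variable {G : Type*} [Group G] [TopologicalSpace G] {d : G → G → ℝ}

lemma dist_self (hd : IsCompatibleLeftInvariantMetric G d) (x : G) : d x x = 0 :=
  (hd.1.1 x x).2 rfl

lemma dist_comm (hd : IsCompatibleLeftInvariantMetric G d) (x y : G) : d x y = d y x :=
  hd.1.2.1 x y

lemma dist_triangle (hd : IsCompatibleLeftInvariantMetric G d) (x y z : G) :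
    d x z ≤ d x y + d y z :=
  hd.1.2.2 x y z

lemma dist_nonneg (hd : IsCompatibleLeftInvariantMetric G d) (x y : G) : 0 ≤ d x y := by
  linarith [hd.dist_triangle x y x, hd.dist_self x, hd.dist_comm x y]

lemma dist_mul_left (hd : IsCompatibleLeftInvariantMetric G d) (h g f : G) :
    d (h * g) (h * f) = d g f :=
  hd.2.2 h g f

lemma dist_eq_dist_inv_mul_one (hd : IsCompatibleLeftInvariantMetric G d) (g f : G) :
    d g f = d (f⁻¹ * g) 1 := by
  rw [← hd.dist_mul_left f⁻¹, inv_mul_cancel]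

lemma dist_inv_one (hd : IsCompatibleLeftInvariantMetric G d) (u : G) : d u⁻¹ 1 = d u 1 := by
  rw [← hd.dist_mul_left u, mul_inv_cancel, mul_one, hd.dist_comm]

lemma dist_mul_one_le (hd : IsCompatibleLeftInvariantMetric G d) (u v : G) :
    d (u * v) 1 ≤ d u 1 + d v 1 := by
  calc d (u * v) 1 ≤ d (u * v) (u * 1) + d u 1 := by simpa using hd.dist_triangle (u * v) u 1
    _ = d u 1 + d v 1 := by rw [hd.dist_mul_left, add_comm]

lemma dist_mul_prod_le (hd : IsCompatibleLeftInvariantMetric G d) (f : G) (l : List G) :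
    d (f * l.prod) f ≤ (l.map fun s => d s 1).sum := by
  induction l generalizing f with
  | nil => simp [hd.dist_self]
  | cons s t ih =>
    calc d (f * (s :: t).prod) f ≤ d (f * s * t.prod) (f * s) + d (f * s) (f * 1) := by
          simpa [mul_assoc] using hd.dist_triangle (f * (s :: t).prod) (f * s) f
      _ ≤ ((s :: t).map fun s => d s 1).sum := by
          rw [hd.dist_mul_left, List.map_cons, List.sum_cons, add_comm]
          exact add_le_add_right (ih (f * s)) _

lemma dist_prod_take_succ (hd : IsCompatibleLeftInvariantMetric G d) (x : G) (l : List G)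
    (i : ℕ) (hi : i < l.length) :
    d (x * (l.take i).prod) (x * (l.take (i + 1)).prod) = d l[i] 1 := by
  have := hd.dist_mul_left (x * (l.take i).prod) 1 l[i]
  rw [mul_one] at this
  rw [List.prod_take_succ _ _ hi, ← mul_assoc, this, hd.dist_comm]

lemma sum_dist_prod_take (hd : IsCompatibleLeftInvariantMetric G d) (x : G) (l : List G) :
    ∑ i ∈ Finset.range l.length, d (x * (l.take i).prod) (x * (l.take (i + 1)).prod) =
      (l.map fun s => d s 1).sum := by
  rw [Finset.sum_range, ← Fin.sum_univ_fun_getElem]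
  exact Finset.sum_congr rfl fun i _ => hd.dist_prod_take_succ x l i i.2

end IsCompatibleLeftInvariantMetric

section Compatibility

variable {G : Type*} [TopologicalSpace G] {d e : G → G → ℝ}

lemma IsCompatible.of_le (hd : IsCompatible G d) (hle : ∀ x y, d x y ≤ e x y)
    (hsmall : ∀ x, ∀ ε > 0, ∃ δ > 0, ∀ y, d x y < δ → e x y < ε) : IsCompatible G e := by
  intro x s
  constructor
  · intro hs
    obtain ⟨ε, hε, hball⟩ := (hd x s).1 hs
    exact ⟨ε, hε, fun y hy => hball (lt_of_le_of_lt (hle x y) hy)⟩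
  · rintro ⟨ε, hε, hball⟩
    obtain ⟨δ, hδ, hδε⟩ := hsmall x ε hε
    exact (hd x s).2 ⟨δ, hδ, fun y hy => hball (hδε y hy)⟩

lemma IsCompatible.exists_dist_lt (hd : IsCompatible G d) (he : IsCompatible G e) (x : G) :
    ∀ ε > 0, ∃ δ > 0, ∀ y, d x y < δ → e x y < ε := fun ε hε =>
  (hd x _).1 ((he x _).2 ⟨ε, hε, subset_rfl⟩)

variable [Group G]

lemma IsCompatibleLeftInvariantMetric.add_length (hd : IsCompatibleLeftInvariantMetric G d)
    {ℓ : G → ℝ} (hℓ_one : ℓ 1 = 0) (hℓ_inv : ∀ u, ℓ u⁻¹ = ℓ u)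
    (hℓ_mul : ∀ u v, ℓ (u * v) ≤ ℓ u + ℓ v)
    (hℓ_small : ∀ ε > 0, ∃ δ > 0, ∀ u, d u 1 < δ → ℓ u < ε) :
    IsCompatibleLeftInvariantMetric G (fun g f => d g f + ℓ (f⁻¹ * g)) := by
  have hℓ_nonneg : ∀ u, 0 ≤ ℓ u := fun u => by
    have := hℓ_mul u u⁻¹
    rw [mul_inv_cancel, hℓ_one, hℓ_inv] at this
    linarith
  refine ⟨⟨fun x y => ⟨fun h0 => ?_, ?_⟩, fun x y => ?_, fun x y z => ?_⟩, ?_, fun h g f => ?_⟩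
  · exact (hd.1.1 x y).1 (by linarith [hd.dist_nonneg x y, hℓ_nonneg (y⁻¹ * x)])
  · rintro rfl
    simp [hd.dist_self, hℓ_one]
  · show d x y + ℓ (y⁻¹ * x) = d y x + ℓ (x⁻¹ * y)
    rw [hd.dist_comm, ← hℓ_inv, mul_inv_rev, inv_inv]
  · have := hℓ_mul (z⁻¹ * y) (y⁻¹ * x)
    simp only [mul_assoc, mul_inv_cancel_left] at this
    linarith [hd.dist_triangle x y z]
  · refine hd.2.1.of_le (fun x y => le_add_of_nonneg_right (hℓ_nonneg _)) fun x ε hε => ?_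
    obtain ⟨δ, hδ, hℓδ⟩ := hℓ_small (ε / 2) (by positivity)
    refine ⟨min δ (ε / 2), by positivity, fun y hy => ?_⟩
    have hyδ : d (y⁻¹ * x) 1 < δ := by
      rw [← hd.dist_eq_dist_inv_mul_one]
      exact hy.trans_le (min_le_left _ _)
    show d x y + ℓ (y⁻¹ * x) < ε
    linarith [hℓδ _ hyδ, min_le_right δ (ε / 2)]
  · simp [mul_assoc, hd.dist_mul_left]

end Compatibility

section Properness

variable {G : Type*} [Group G] [TopologicalSpace G] {d e : G → G → ℝ}

lemma IsCompatibleLeftInvariantMetric.add_dist_inv_mul_one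
    (hd : IsCompatibleLeftInvariantMetric G d) (he : IsCompatibleLeftInvariantMetric G e) :
    IsCompatibleLeftInvariantMetric G (fun g f => d g f + e (f⁻¹ * g) 1) := by
  refine hd.add_length (ℓ := fun u => e u 1) (he.dist_self 1) he.dist_inv_one he.dist_mul_one_le
    fun ε hε => ?_
  obtain ⟨δ, hδ, hδε⟩ := hd.2.1.exists_dist_lt he.2.1 1 ε hε
  exact ⟨δ, hδ, fun u hu => by
    rw [he.dist_comm]; exact hδε u (by rwa [hd.dist_comm])⟩

lemma MetricallyProperMetric.exists_bound_on_ball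
    (hd : IsCompatibleLeftInvariantMetric G d) (hproper : MetricallyProperMetric G d)
    (he : IsCompatibleLeftInvariantMetric G e) (R : ℝ) :
    ∃ C, ∀ u, d u 1 ≤ R → e u 1 ≤ C := by
  by_contra! hunbdd
  choose g hgR hge using fun n : ℕ => hunbdd n
  have hinfty : TendsToInfinity G g := by
    refine ⟨_, hd.add_dist_inv_mul_one he,
      tendsto_atTop_mono (fun n => ?_) tendsto_natCast_atTop_atTop⟩
    simp only [inv_one, one_mul]
    linarith [hge n, hd.dist_nonneg (g n) 1]
  obtain ⟨n, hn⟩ := ((hproper g hinfty).eventually_gt_atTop R).exists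
  linarith [hgR n]

end Properness

section SubgroupLevel

variable {G : Type*} [Group G] (V : ℕ → Subgroup G)

noncomputable def subgroupLevel (g : G) : ℕ := sInf {n | g ∈ V n}

variable {V}

lemma mem_subgroupLevel (hcov : ∀ g, ∃ n, g ∈ V n) (g : G) : g ∈ V (subgroupLevel V g) :=
  Nat.sInf_mem (hcov g)

lemma subgroupLevel_le {g : G} {n : ℕ} (h : g ∈ V n) : subgroupLevel V g ≤ n :=
  Nat.sInf_le h

lemma lt_subgroupLevel (hV : Monotone V) (hcov : ∀ g, ∃ n, g ∈ V n) {g : G} {n : ℕ}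
    (h : g ∉ V n) : n < subgroupLevel V g := by
  by_contra! hle
  exact h (hV hle (mem_subgroupLevel hcov g))

lemma subgroupLevel_mul (hV : Monotone V) (hcov : ∀ g, ∃ n, g ∈ V n) (g h : G) :
    subgroupLevel V (g * h) ≤ max (subgroupLevel V g) (subgroupLevel V h) :=
  subgroupLevel_le <| mul_mem (hV (le_max_left _ _) (mem_subgroupLevel hcov g))
    (hV (le_max_right _ _) (mem_subgroupLevel hcov h))

lemma subgroupLevel_inv (g : G) : subgroupLevel V g⁻¹ = subgroupLevel V g := by
  simp only [subgroupLevel, inv_mem_iff]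

lemma subgroupLevel_eq_zero {g : G} (h : g ∈ V 0) : subgroupLevel V g = 0 :=
  Nat.le_zero.1 (subgroupLevel_le h)

lemma IsCompatibleLeftInvariantMetric.add_subgroupLevel [TopologicalSpace G] {d : G → G → ℝ}
    (hd : IsCompatibleLeftInvariantMetric G d) (hV : Monotone V) (hcov : ∀ g, ∃ n, g ∈ V n)
    {δ : ℝ} (hδ : 0 < δ) (hball : ∀ u, d u 1 < δ → u ∈ V 0) {ψ : ℕ → ℝ} (hψ : Monotone ψ)
    (hψ_zero : ψ 0 = 0) :
    IsCompatibleLeftInvariantMetric G (fun g f => d g f + ψ (subgroupLevel V (f⁻¹ * g))) := by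
  have hψ_nonneg : ∀ n, 0 ≤ ψ n := fun n => hψ_zero ▸ hψ (Nat.zero_le n)
  refine hd.add_length (ℓ := fun u => ψ (subgroupLevel V u))
    (by rw [subgroupLevel_eq_zero (one_mem _), hψ_zero]) (fun u => by rw [subgroupLevel_inv])
    (fun u v => ?_) fun ε hε => ⟨δ, hδ, fun u hu => ?_⟩
  · calc ψ (subgroupLevel V (u * v)) ≤ max (ψ (subgroupLevel V u)) (ψ (subgroupLevel V v)) := by
          rw [← hψ.map_max]; exact hψ (subgroupLevel_mul hV hcov u v)
      _ ≤ _ := max_le_add_of_nonneg (hψ_nonneg _) (hψ_nonneg _)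
  · simpa [subgroupLevel_eq_zero (hball u hu), hψ_zero] using hε

end SubgroupLevel

lemma IsMaximalMetric.exists_closure_ball_eq_top {G : Type*} [Group G] [TopologicalSpace G]
    {d : G → G → ℝ} (hd : IsCompatibleLeftInvariantMetric G d) (hmax : IsMaximalMetric G d) :
    ∃ N : ℝ, 1 ≤ N ∧ Subgroup.closure {u : G | d u 1 ≤ N} = ⊤ := by
  by_contra! hne
  set V : ℕ → Subgroup G := fun n => Subgroup.closure {u : G | d u 1 ≤ n + 1}
  have hV : Monotone V := fun m n hmn => Subgroup.closure_mono fun u (hu : d u 1 ≤ m + 1) =>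
    show d u 1 ≤ n + 1 by linarith [(Nat.cast_le (α := ℝ)).2 hmn]
  have hcov : ∀ g, ∃ n, g ∈ V n := fun g => ⟨⌈d g 1⌉₊, Subgroup.subset_closure
    (show d g 1 ≤ ⌈d g 1⌉₊ + 1 by linarith [Nat.le_ceil (d g 1)])⟩
  have hball : ∀ u, d u 1 < 1 → u ∈ V 0 := fun u hu =>
    Subgroup.subset_closure (show d u 1 ≤ (0 : ℕ) + 1 by simpa using hu.le)
  have hpick : ∀ n, ∃ p, p ∉ V n := fun n => by
    by_contra! h
    exact hne (n + 1) (by simp) ((Subgroup.eq_top_iff' _).2 h)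
  choose p hp using hpick
  -- `ψ` is chosen so that the new metric gives `p j` length at least `j * (d (p j) 1 + 1)`.
  set ψ : ℕ → ℝ := fun m => ∑ j ∈ Finset.range m, j * (d (p j) 1 + 1)
  have hterm_nonneg : ∀ j : ℕ, 0 ≤ (j : ℝ) * (d (p j) 1 + 1) := fun j => by
    have := hd.dist_nonneg (p j) 1; positivity
  have hψ : Monotone ψ := fun m n hmn =>
    Finset.sum_le_sum_of_subset_of_nonneg (Finset.range_mono hmn) fun j _ _ => hterm_nonneg j
  obtain ⟨K, -, hK⟩ := hmax _ (hd.add_subgroupLevel hV hcov one_pos hball hψ (by simp [ψ]))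
  set j := ⌈K⌉₊ + 1
  have hψj : (j : ℝ) * (d (p j) 1 + 1) ≤ ψ (subgroupLevel V (p j)) :=
    (Finset.single_le_sum (fun i _ => hterm_nonneg i) (Finset.self_mem_range_succ j)).trans
      (hψ (lt_subgroupLevel hV hcov (hp j)))
  have hKj := hK (p j) 1
  simp only [inv_one, one_mul] at hKj
  have hD := hd.dist_nonneg (p j) 1
  have hjK : (j : ℝ) ≤ K := le_of_mul_le_mul_right (by nlinarith) (by linarith : 0 < d (p j) 1 + 1)
  have : (j : ℝ) = ⌈K⌉₊ + 1 := by simp [j]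
  linarith [Nat.le_ceil K]

section WeightedWordMetric

variable {G : Type*} [Group G] (S : Set G) (w : G → ℝ)

def wordWeights (g f : G) : Set ℝ :=
  {r | ∃ l : List G, (∀ x ∈ l, x ∈ S) ∧ g = f * l.prod ∧ r = (l.map w).sum}

noncomputable def weightedWordMetric (g f : G) : ℝ := sInf (wordWeights S w g f)

lemma wordMetric_eq_weightedWordMetric : wordMetric S = weightedWordMetric S fun _ => 1 := by
  funext g f
  simp [wordMetric, weightedWordMetric, wordWeights]

variable {S w}

lemma exists_list_prod_eq_of_closure_eq_top (hgen : Subgroup.closure S = ⊤)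
    (hsym : ∀ u ∈ S, u⁻¹ ∈ S) (g : G) :
    ∃ l : List G, (∀ x ∈ l, x ∈ S) ∧ l.prod = g := by
  have hg : g ∈ Submonoid.closure (S ∪ S⁻¹) := by
    rw [← Subgroup.closure_toSubmonoid, hgen]; trivial
  obtain ⟨l, hl, rfl⟩ := Submonoid.exists_list_of_mem_closure hg
  exact ⟨l, fun x hx => (hl x hx).elim id fun h => by simpa using hsym _ h, rfl⟩

lemma wordWeights_nonempty (hgen : Subgroup.closure S = ⊤) (hsym : ∀ u ∈ S, u⁻¹ ∈ S)
    (g f : G) : (wordWeights S w g f).Nonempty := by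
  obtain ⟨l, hl, hprod⟩ := exists_list_prod_eq_of_closure_eq_top hgen hsym (f⁻¹ * g)
  exact ⟨_, l, hl, by rw [hprod, mul_inv_cancel_left], rfl⟩

lemma wordWeights_bddBelow (hw : ∀ s ∈ S, 0 ≤ w s) (g f : G) : BddBelow (wordWeights S w g f) :=
  ⟨0, by
    rintro _ ⟨l, hl, -, rfl⟩
    exact List.sum_nonneg fun r hr => by
      obtain ⟨s, hs, rfl⟩ := List.mem_map.1 hr
      exact hw s (hl s hs)⟩

lemma weightedWordMetric_le (hw : ∀ s ∈ S, 0 ≤ w s) {g f : G} {l : List G}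
    (hl : ∀ x ∈ l, x ∈ S) (hprod : g = f * l.prod) : weightedWordMetric S w g f ≤ (l.map w).sum :=
  csInf_le (wordWeights_bddBelow hw g f) ⟨l, hl, hprod, rfl⟩

lemma le_weightedWordMetric (hgen : Subgroup.closure S = ⊤) (hsym : ∀ u ∈ S, u⁻¹ ∈ S)
    {g f : G} {c : ℝ} (h : ∀ l : List G, (∀ x ∈ l, x ∈ S) → g = f * l.prod → c ≤ (l.map w).sum) :
    c ≤ weightedWordMetric S w g f :=
  le_csInf (wordWeights_nonempty hgen hsym g f) fun _ ⟨l, hl, hprod, hr⟩ => hr ▸ h l hl hprod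

lemma exists_sum_lt_of_weightedWordMetric_lt (hgen : Subgroup.closure S = ⊤)
    (hsym : ∀ u ∈ S, u⁻¹ ∈ S) {g f : G} {c : ℝ} (h : weightedWordMetric S w g f < c) :
    ∃ l : List G, (∀ x ∈ l, x ∈ S) ∧ g = f * l.prod ∧ (l.map w).sum < c := by
  obtain ⟨_, ⟨l, hl, hprod, rfl⟩, hlt⟩ :=
    exists_lt_of_csInf_lt (wordWeights_nonempty hgen hsym g f) h
  exact ⟨l, hl, hprod, hlt⟩

lemma weightedWordMetric_triangle (hw : ∀ s ∈ S, 0 ≤ w s) (hgen : Subgroup.closure S = ⊤)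
    (hsym : ∀ u ∈ S, u⁻¹ ∈ S) (g h f : G) :
    weightedWordMetric S w g f ≤ weightedWordMetric S w g h + weightedWordMetric S w h f := by
  rw [weightedWordMetric, weightedWordMetric, weightedWordMetric,
    ← csInf_add (wordWeights_nonempty hgen hsym g h) (wordWeights_bddBelow hw g h)
      (wordWeights_nonempty hgen hsym h f) (wordWeights_bddBelow hw h f)]
  refine csInf_le_csInf (wordWeights_bddBelow hw g f)
    ((wordWeights_nonempty hgen hsym g h).add (wordWeights_nonempty hgen hsym h f)) ?_
  rintro _ ⟨_, ⟨l₁, hl₁, hprod₁, rfl⟩, _, ⟨l₂, hl₂, hprod₂, rfl⟩, rfl⟩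
  refine ⟨l₂ ++ l₁, fun x hx => (List.mem_append.1 hx).elim (hl₂ x) (hl₁ x), ?_, ?_⟩
  · rw [List.prod_append, ← mul_assoc, ← hprod₂, ← hprod₁]
  · simp [add_comm]

lemma wordMetric_triangle (hgen : Subgroup.closure S = ⊤) (hsym : ∀ u ∈ S, u⁻¹ ∈ S) (g h f : G) :
    wordMetric S g f ≤ wordMetric S g h + wordMetric S h f := by
  simp only [wordMetric_eq_weightedWordMetric]
  exact weightedWordMetric_triangle (fun _ _ => zero_le_one) hgen hsym g h f

lemma weightedWordMetric_comm_le (hw : ∀ s ∈ S, 0 ≤ w s) (hgen : Subgroup.closure S = ⊤)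
    (hsym : ∀ u ∈ S, u⁻¹ ∈ S) (hw_inv : ∀ s ∈ S, w s⁻¹ = w s) (g f : G) :
    weightedWordMetric S w g f ≤ weightedWordMetric S w f g := by
  refine csInf_le_csInf (wordWeights_bddBelow hw g f) (wordWeights_nonempty hgen hsym f g) ?_
  rintro _ ⟨l, hl, hprod, rfl⟩
  refine ⟨(l.map (·⁻¹)).reverse, fun x hx => ?_, ?_, ?_⟩
  · obtain ⟨s, hs, rfl⟩ := List.mem_map.1 (List.mem_reverse.1 hx)
    exact hsym s (hl s hs)
  · rw [← List.prod_inv_reverse, hprod, mul_inv_cancel_right]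
  · rw [List.map_reverse, List.sum_reverse, List.map_map]
    exact congrArg List.sum (List.map_congr_left fun s hs => (hw_inv s (hl s hs)).symm)

lemma weightedWordMetric_mul_left (h g f : G) :
    weightedWordMetric S w (h * g) (h * f) = weightedWordMetric S w g f := by
  simp only [weightedWordMetric, wordWeights, mul_assoc, mul_right_inj]

lemma dist_le_weightedWordMetric [TopologicalSpace G] {d : G → G → ℝ}
    (hd : IsCompatibleLeftInvariantMetric G d) (hgen : Subgroup.closure S = ⊤)
    (hsym : ∀ u ∈ S, u⁻¹ ∈ S) (hdw : ∀ s ∈ S, d s 1 ≤ w s) (g f : G) :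
    d g f ≤ weightedWordMetric S w g f :=
  le_weightedWordMetric hgen hsym fun l hl hprod => hprod ▸
    (hd.dist_mul_prod_le f l).trans (List.sum_le_sum fun s hs => hdw s (hl s hs))

end WeightedWordMetric

section Maximal

variable {G : Type*} [Group G] [TopologicalSpace G] {d : G → G → ℝ}

lemma IsCompatibleLeftInvariantMetric.inv_mem_ball (hd : IsCompatibleLeftInvariantMetric G d)
    {ε : ℝ} : ∀ u ∈ {u : G | d u 1 ≤ ε}, u⁻¹ ∈ {u : G | d u 1 ≤ ε} := fun u hu => by
  show d u⁻¹ 1 ≤ ε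
  rwa [hd.dist_inv_one]

/-- The path metric of `d` along chains with steps of length at most `N`. -/
lemma IsCompatibleLeftInvariantMetric.weightedWordMetric_ball
    (hd : IsCompatibleLeftInvariantMetric G d) {N : ℝ} (hN : 0 < N)
    (hgen : Subgroup.closure {u : G | d u 1 ≤ N} = ⊤) :
    IsCompatibleLeftInvariantMetric G (weightedWordMetric {u : G | d u 1 ≤ N} fun s => d s 1) := by
  set p := weightedWordMetric {u : G | d u 1 ≤ N} fun s => d s 1
  have hw : ∀ s ∈ {u : G | d u 1 ≤ N}, 0 ≤ d s 1 := fun s _ => hd.dist_nonneg s 1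
  have hcomm := weightedWordMetric_comm_le hw hgen hd.inv_mem_ball fun s _ => hd.dist_inv_one s
  have hle : ∀ g f, d g f ≤ p g f := dist_le_weightedWordMetric hd hgen hd.inv_mem_ball
    fun s _ => le_rfl
  have heq : ∀ g f, d g f ≤ N → p g f = d g f := fun g f h => by
    refine le_antisymm ?_ (hle g f)
    calc p g f ≤ ([f⁻¹ * g].map fun s => d s 1).sum :=
          weightedWordMetric_le hw (by simpa [← hd.dist_eq_dist_inv_mul_one] using h) (by simp)
      _ = d g f := by simp [← hd.dist_eq_dist_inv_mul_one]
  refine ⟨⟨fun x y => ⟨fun h0 => ?_, ?_⟩, fun x y => le_antisymm (hcomm x y) (hcomm y x),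
      weightedWordMetric_triangle hw hgen hd.inv_mem_ball⟩,
    hd.2.1.of_le hle fun x ε hε => ⟨min ε N, by positivity, fun y hy => ?_⟩,
    weightedWordMetric_mul_left⟩
  · exact (hd.1.1 x y).1 (le_antisymm (h0 ▸ hle x y) (hd.dist_nonneg x y))
  · rintro rfl
    rw [heq x x (by rw [hd.dist_self]; exact hN.le), hd.dist_self]
  · rw [heq x y (hy.le.trans (min_le_right _ _))]
    exact hy.trans_le (min_le_left _ _)

lemma IsMaximalMetric.isLargeScaleGeodesic (hd : IsCompatibleLeftInvariantMetric G d)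
    (hmax : IsMaximalMetric G d) : IsLargeScaleGeodesic d := by
  obtain ⟨N, hN, hgen⟩ := hmax.exists_closure_ball_eq_top hd
  obtain ⟨K, hK, hpath⟩ := hmax _ (hd.weightedWordMetric_ball (by linarith) hgen)
  refine ⟨N + 2 * K + 1, by linarith, fun x y => ?_⟩
  rcases lt_or_ge (d x y) 1 with hxy | hxy
  · refine ⟨1, fun i => if i = 0 then x else y, rfl, rfl, fun i hi => ?_, ?_⟩
    · obtain rfl : i = 0 := by omega
      simp only [if_pos, zero_add, one_ne_zero, if_false]
      linarith
    · simp only [Finset.sum_range_one, if_pos, zero_add, one_ne_zero, if_false]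
      nlinarith [hd.dist_nonneg x y]
  -- An almost shortest `N`-chain has length `< K d x y + K + 1 ≤ (2K + 1) d x y`.
  obtain ⟨l, hl, hprod, hsum⟩ := exists_sum_lt_of_weightedWordMetric_lt hgen hd.inv_mem_ball
    (lt_add_one (weightedWordMetric {u : G | d u 1 ≤ N} (fun s => d s 1) y x))
  refine ⟨l.length, fun i => x * (l.take i).prod, by simp, by simp [hprod], fun i hi => ?_, ?_⟩
  · rw [hd.dist_prod_take_succ x l i hi]
    have : d l[i] 1 ≤ N := hl _ (List.getElem_mem hi)
    linarith
  · refine (hd.sum_dist_prod_take x l).trans_le ?_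
    have := hpath y x
    rw [hd.dist_comm y x] at this
    nlinarith

end Maximal

section WordMetric

variable {G : Type*} [Group G] [TopologicalSpace G] {d : G → G → ℝ}

lemma IsCompatibleLeftInvariantMetric.closure_ball_eq_top_of_chains
    (hd : IsCompatibleLeftInvariantMetric G d) {K : ℝ}
    (hchain : ∀ g, ∃ (n : ℕ) (z : ℕ → G), z 0 = 1 ∧ z n = g ∧ ∀ i < n, d (z i) (z (i + 1)) ≤ K) :
    Subgroup.closure {u : G | d u 1 ≤ K} = ⊤ := by
  refine (Subgroup.eq_top_iff' _).2 fun g => ?_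
  obtain ⟨n, z, hz0, rfl, hstep⟩ := hchain g
  induction n with
  | zero => rw [hz0]; exact one_mem _
  | succ n ih =>
    rw [← mul_inv_cancel_left (z n) (z (n + 1))]
    refine mul_mem (ih fun i hi => hstep i (by omega)) (Subgroup.subset_closure ?_)
    show d ((z n)⁻¹ * z (n + 1)) 1 ≤ K
    rw [← hd.dist_eq_dist_inv_mul_one, hd.dist_comm]
    exact hstep n n.lt_succ_self

lemma IsCompatibleLeftInvariantMetric.wordMetric_ball_le_one
    (hd : IsCompatibleLeftInvariantMetric G d) {ε : ℝ} {g f : G} (h : d g f ≤ ε) :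
    wordMetric {u : G | d u 1 ≤ ε} g f ≤ 1 := by
  rw [wordMetric_eq_weightedWordMetric]
  simpa using weightedWordMetric_le (fun _ _ => zero_le_one) (l := [f⁻¹ * g])
    (by simpa [← hd.dist_eq_dist_inv_mul_one] using h) (by simp)

lemma IsCompatibleLeftInvariantMetric.dist_le_mul_wordMetric
    (hd : IsCompatibleLeftInvariantMetric G d) {S : Set G} (hgen : Subgroup.closure S = ⊤)
    (hsym : ∀ u ∈ S, u⁻¹ ∈ S) {c : ℝ} (hc : 0 < c) (hS : ∀ s ∈ S, d s 1 ≤ c) (g f : G) :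
    d g f ≤ c * wordMetric S g f := by
  rw [← div_le_iff₀' hc, wordMetric_eq_weightedWordMetric]
  refine le_weightedWordMetric hgen hsym fun l hl hprod => ?_
  rw [div_le_iff₀' hc, hprod]
  calc d (f * l.prod) f ≤ (l.map fun s => d s 1).sum := hd.dist_mul_prod_le f l
    _ ≤ (l.map fun _ => c).sum := List.sum_le_sum fun s hs => hS s (hl s hs)
    _ = c * (l.map fun _ => (1 : ℝ)).sum := by simp [mul_comm]

lemma IsCompatibleLeftInvariantMetric.wordMetric_le_of_chain
    (hd : IsCompatibleLeftInvariantMetric G d) {K : ℝ} (hK : 0 < K)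
    (hgen : Subgroup.closure {u : G | d u 1 ≤ 2 * K} = ⊤) (n : ℕ) (z : ℕ → G)
    (hz : ∀ i < n, d (z i) (z (i + 1)) ≤ K) (w : G) (hw : d w (z 0) ≤ K) :
    wordMetric {u : G | d u 1 ≤ 2 * K} (z n) w ≤
      1 + (d w (z 0) + ∑ i ∈ Finset.range n, d (z i) (z (i + 1))) / K := by
  induction n generalizing z w with
  | zero =>
    have : 0 ≤ d w (z 0) / K := div_nonneg (hd.dist_nonneg _ _) hK.le
    have := hd.wordMetric_ball_le_one (g := z 0) (f := w) (ε := 2 * K)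
      (by rw [hd.dist_comm]; linarith)
    simp only [Finset.range_zero, Finset.sum_empty, add_zero]
    linarith
  | succ n ih =>
    set L := ∑ i ∈ Finset.range n, d (z (i + 1)) (z (i + 1 + 1))
    have ih' : ∀ w, d w (z 1) ≤ K →
        wordMetric {u : G | d u 1 ≤ 2 * K} (z (n + 1)) w ≤ 1 + (d w (z 1) + L) / K :=
      ih (fun i => z (i + 1)) fun i hi => hz (i + 1) (by omega)
    have htri := hd.dist_triangle w (z 0) (z 1)
    rw [Finset.sum_range_succ']
    by_cases hw1 : d w (z 1) ≤ K
    · calc wordMetric {u : G | d u 1 ≤ 2 * K} (z (n + 1)) w ≤ 1 + (d w (z 1) + L) / K := ih' w hw1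
        _ ≤ 1 + (d w (z 0) + (L + d (z 0) (z 1))) / K := by gcongr 1 + ?_ / K; linarith
    -- The chain has left the `K`-ball around `w`: re-anchor at `z 1`, at most `2K` from `w`.
    · have h1 : wordMetric {u : G | d u 1 ≤ 2 * K} (z (n + 1)) (z 1) ≤ 1 + L / K := by
        simpa [hd.dist_self] using ih' (z 1) (by rw [hd.dist_self]; exact hK.le)
      have h2 := hd.wordMetric_ball_le_one (g := z 1) (f := w) (ε := 2 * K)
        (by rw [hd.dist_comm]; linarith [hz 0 n.succ_pos])
      have h3 : 1 ≤ (d w (z 0) + d (z 0) (z 1)) / K := by rw [le_div_iff₀ hK]; linarith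
      have hsplit : (d w (z 0) + (L + d (z 0) (z 1))) / K =
          (d w (z 0) + d (z 0) (z 1)) / K + L / K := by ring
      have := wordMetric_triangle hgen hd.inv_mem_ball (z (n + 1)) (z 1) w
      linarith

lemma IsLargeScaleGeodesic.exists_wordMetric_quasiIsometric
    (hd : IsCompatibleLeftInvariantMetric G d) (hlsg : IsLargeScaleGeodesic d) :
    ∃ ε : ℝ, 0 < ε ∧ Subgroup.closure {u : G | d u 1 ≤ ε} = ⊤ ∧
      ∃ K : ℝ, 1 ≤ K ∧ ∀ g f : G,
        (1 / K) * d g f - K ≤ wordMetric {u : G | d u 1 ≤ ε} g f ∧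
        wordMetric {u : G | d u 1 ≤ ε} g f ≤ K * d g f + K := by
  obtain ⟨K, hK, hchain⟩ := hlsg
  have hgen : Subgroup.closure {u : G | d u 1 ≤ 2 * K} = ⊤ :=
    hd.closure_ball_eq_top_of_chains fun g =>
      let ⟨n, z, hz0, hzn, hstep, _⟩ := hchain 1 g
      ⟨n, z, hz0, hzn, fun i hi => (hstep i hi).trans (by linarith)⟩
  refine ⟨2 * K, by positivity, hgen, 2 * K, by linarith, fun g f => ⟨?_, ?_⟩⟩
  · have := hd.dist_le_mul_wordMetric hgen hd.inv_mem_ball (by positivity) (fun _ hs => hs) g f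
    have := (div_le_iff₀' (by positivity)).2 this
    rw [one_div_mul_eq_div]
    linarith
  · obtain ⟨n, z, rfl, rfl, hstep, hsum⟩ := hchain f g
    have hρ := hd.wordMetric_le_of_chain (by positivity) hgen n z hstep (z 0)
      (by rw [hd.dist_self]; positivity)
    have hsum' : (∑ i ∈ Finset.range n, d (z i) (z (i + 1))) / K ≤ d (z n) (z 0) := by
      rw [div_le_iff₀ (by positivity), hd.dist_comm]
      linarith
    rw [hd.dist_self, zero_add] at hρ
    nlinarith [hd.dist_nonneg (z n) (z 0)]

lemma MetricallyProperMetric.isMaximalMetric_of_wordMetric_le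
    (hd : IsCompatibleLeftInvariantMetric G d) (hproper : MetricallyProperMetric G d) {ε K : ℝ}
    (hgen : Subgroup.closure {u : G | d u 1 ≤ ε} = ⊤)
    (hρ : ∀ g f, wordMetric {u : G | d u 1 ≤ ε} g f ≤ K * d g f + K) : IsMaximalMetric G d := by
  intro e he
  obtain ⟨C, hC⟩ := hproper.exists_bound_on_ball hd he ε
  have hC₁ : 0 < max C 1 := lt_max_of_lt_right one_pos
  refine ⟨max 1 (max C 1 * K), le_max_left _ _, fun g f => ?_⟩
  calc e g f ≤ max C 1 * wordMetric {u : G | d u 1 ≤ ε} g f :=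
        he.dist_le_mul_wordMetric hgen hd.inv_mem_ball hC₁ (fun s hs => (hC s hs).trans
          (le_max_left _ _)) g f
    _ ≤ max C 1 * K * d g f + max C 1 * K := by nlinarith [hρ g f]
    _ ≤ max 1 (max C 1 * K) * d g f + max 1 (max C 1 * K) := by
        gcongr
        · exact hd.dist_nonneg g f
        all_goals exact le_max_right _ _

end WordMetric

theorem maximal_metric_tfae_general {G : Type*} [Group G] [TopologicalSpace G]
    (d : G → G → ℝ) (hd : IsCompatibleLeftInvariantMetric G d)
    (hproper : MetricallyProperMetric G d) :
    List.TFAE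
      [ -- (1) d is maximal
        ∀ e : G → G → ℝ, IsCompatibleLeftInvariantMetric G e →
          ∃ K : ℝ, 1 ≤ K ∧ ∀ g f : G, e g f ≤ K * d g f + K,
        -- (2) (G,d) is large scale geodesic
        ∃ K : ℝ, 1 ≤ K ∧ ∀ x y : G, ∃ (n : ℕ) (z : ℕ → G), z 0 = x ∧ z n = y ∧
          (∀ i < n, d (z i) (z (i + 1)) ≤ K) ∧
          (∑ i ∈ Finset.range n, d (z i) (z (i + 1))) ≤ K * d x y,
        -- (3) some ball B_ε generates G and d is quasi-isometric to the word metric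
        ∃ ε : ℝ, 0 < ε ∧ Subgroup.closure {u : G | d u 1 ≤ ε} = ⊤ ∧
          ∃ K : ℝ, 1 ≤ K ∧ ∀ g f : G,
            (1 / K) * d g f - K ≤ wordMetric {u : G | d u 1 ≤ ε} g f ∧
            wordMetric {u : G | d u 1 ≤ ε} g f ≤ K * d g f + K ] := by
  tfae_have 1 → 2 := IsMaximalMetric.isLargeScaleGeodesic hd
  tfae_have 2 → 3 := IsLargeScaleGeodesic.exists_wordMetric_quasiIsometric hd
  tfae_have 3 → 1 := fun ⟨_, _, hgen, _, _, hρ⟩ =>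
    hproper.isMaximalMetric_of_wordMetric_le hd hgen fun g f => (hρ g f).2
  tfae_finish

theorem maximal_metric_tfae {G : Type*} [Group G] [TopologicalSpace G]
    [IsTopologicalGroup G] [TopologicalSpace.MetrizableSpace G]
    (d : G → G → ℝ) (hd : IsCompatibleLeftInvariantMetric G d)
    (hproper : MetricallyProperMetric G d) :
    List.TFAE
      [ -- (1) d is maximal
        ∀ e : G → G → ℝ, IsCompatibleLeftInvariantMetric G e →
          ∃ K : ℝ, 1 ≤ K ∧ ∀ g f : G, e g f ≤ K * d g f + K,
        -- (2) (G,d) is large scale geodesic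
        ∃ K : ℝ, 1 ≤ K ∧ ∀ x y : G, ∃ (n : ℕ) (z : ℕ → G), z 0 = x ∧ z n = y ∧
          (∀ i < n, d (z i) (z (i + 1)) ≤ K) ∧
          (∑ i ∈ Finset.range n, d (z i) (z (i + 1))) ≤ K * d x y,
        -- (3) some ball B_ε generates G and d is quasi-isometric to the word metric
        ∃ ε : ℝ, 0 < ε ∧ Subgroup.closure {u : G | d u 1 ≤ ε} = ⊤ ∧
          ∃ K : ℝ, 1 ≤ K ∧ ∀ g f : G,
            (1 / K) * d g f - K ≤ wordMetric {u : G | d u 1 ≤ ε} g f ∧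
            wordMetric {u : G | d u 1 ≤ ε} g f ≤ K * d g f + K ] :=
  maximal_metric_tfae_general d hd hproper
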